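/- Let W = A ≀_X B be a permutational wreath product where A acts transitively on the finite set X and B is abelian. An element (a; (h_x)_{x∈X}) of W lies in the commutator subgroup W' if and only if a ∈ A' and the product of all coordinates ∏_{x∈X} h_x equals the identity of B. -/

import Mathlib

def permAut {X : Type*} (B : Type*) [Group B] (e : Equiv.Perm X) : MulAut (X → B) :=
  MulEquiv.arrowCongr e (MulEquiv.refl B)

def wreathMul {A X : Type*} [Group A] (ρ : A →* Equiv.Perm X) (B : Type*) [Group B] :
    A →* MulAut (X → B) where
  toFun a := permAut B (ρ a)
  map_one' := by
    ext f x
    simp [permAut] <;> rfl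
  map_mul' := by
    intro a b
    ext f x
    simp [permAut, MulEquiv.arrowCongr, map_mul]
    rfl

noncomputable def mingen (G : Type*) [Group G] : ℕ :=
  sInf {k | ∃ S : Finset G, S.card = k ∧ Subgroup.closure (S : Set G) = ⊤}

/-!
The projection `W → A` and the coordinate product `W → B` are homomorphisms, the second into an
abelian group, so they send `W'` into `A'` and to `1`. Conversely `w = h · a` with `a ∈ A' ≤ W'`,
and a base element `h` with `∏ₓ hₓ = 1` is a product of moves `δₓ(b) δ_y(b)⁻¹`, where `δₓ(b)` is
`b` at `x` and `1` elsewhere. By transitivity some `c ∈ A` sends `y` to `x`, and then that move is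
the commutator `⁅c, δ_y(b)⁆`.
-/

theorem map_mem_commutator {G H : Type*} [Group G] [Group H] (f : G →* H) {g : G}
    (hg : g ∈ commutator G) : f g ∈ commutator H := by
  have hle : (commutator G).map f ≤ commutator H := by
    rw [map_commutator_eq]
    exact Subgroup.commutator_mono le_top le_top
  exact hle (Subgroup.mem_map_of_mem f hg)

open scoped commutatorElement in
theorem SemidirectProduct.inl_aut_mul_inv_mem_commutator {N G : Type*} [Group N] [Group G]
    (φ : G →* MulAut N) (g : G) (n : N) :
    inl (φ g n * n⁻¹) ∈ commutator (N ⋊[φ] G) := by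
  have h : (inl (φ g n * n⁻¹) : N ⋊[φ] G) = ⁅(inr g : N ⋊[φ] G), inl n⁆ := by
    rw [map_mul, map_inv, inl_aut, commutatorElement_def, map_inv]
  rw [h]
  exact Subgroup.commutator_mem_commutator (Subgroup.mem_top _) (Subgroup.mem_top _)

theorem Subgroup.mem_of_prod_eq_one_of_mulSingle_div_mem {X B : Type*} [Fintype X]
    [DecidableEq X] [CommGroup B]
    (N : Subgroup (X → B)) (hN : ∀ x y b, Pi.mulSingle x b / Pi.mulSingle y b ∈ N)
    {f : X → B} (hf : ∏ x, f x = 1) : f ∈ N := by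
  rcases isEmpty_or_nonempty X with _ | ⟨⟨x₀⟩⟩
  · exact Subsingleton.elim f 1 ▸ N.one_mem
  have hsum : f = ∏ x, Pi.mulSingle x (f x) / Pi.mulSingle x₀ (f x) := by
    have hx₀ : ∏ x, (Pi.mulSingle x₀ (f x) : X → B) = 1 := by
      rw [← Pi.mulSingle_one x₀, ← hf]
      exact (map_prod (MonoidHom.mulSingle (fun _ => B) x₀) f _).symm
    rw [Finset.prod_div_distrib, Finset.univ_prod_mulSingle, hx₀, div_one]
  rw [hsum]
  exact N.prod_mem fun x _ => hN x x₀ (f x)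

theorem wreathMul_mulSingle {A X B : Type*} [Group A] [Group B] [DecidableEq X]
    (ρ : A →* Equiv.Perm X) (a : A) (x : X) (b : B) :
    wreathMul ρ B a (Pi.mulSingle x b) = Pi.mulSingle (ρ a x) b :=
  Pi.mulSingle_comp_equiv (ρ a).symm x b

def wreathCoordProd {A X B : Type*} [Group A] [CommGroup B] [Fintype X]
    (ρ : A →* Equiv.Perm X) : (X → B) ⋊[wreathMul ρ B] A →* B where
  toFun w := ∏ x, w.left x
  map_one' := Finset.prod_const_one
  map_mul' u v := by
    simp only [SemidirectProduct.mul_left, Pi.mul_apply, Finset.prod_mul_distrib]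
    congr 1
    exact Equiv.prod_comp (ρ u.right).symm v.left

/-- for `W = A ≀_X B` with `A` transitive on the finite set `X` and `B`
abelian, an element `(a; (h_x))` of `W` lies in `W'` iff `a ∈ A'` and `∏_x h_x = 1`. -/
theorem mem_commutator_wreath_iff {A X B : Type*} [Group A] [CommGroup B] [Fintype X]
    (ρ : A →* Equiv.Perm X) (htrans : ∀ x y : X, ∃ a : A, ρ a x = y)
    (w : (X → B) ⋊[wreathMul ρ B] A) :
    w ∈ commutator ((X → B) ⋊[wreathMul ρ B] A) ↔
      w.right ∈ commutator A ∧ ∏ x : X, w.left x = 1 := by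
  classical
  constructor
  · intro hw
    exact ⟨map_mem_commutator SemidirectProduct.rightHom hw,
      Abelianization.commutator_subset_ker (wreathCoordProd ρ) hw⟩
  · rintro ⟨hright, hleft⟩
    rw [← SemidirectProduct.inl_left_mul_inr_right w]
    refine Subgroup.mul_mem _ ?_ (map_mem_commutator SemidirectProduct.inr hright)
    refine Subgroup.mem_comap.mp <| Subgroup.mem_of_prod_eq_one_of_mulSingle_div_mem
      (.comap SemidirectProduct.inl _) (fun x y b => ?_) hleft
    obtain ⟨a, rfl⟩ := htrans y x
    simpa only [Subgroup.mem_comap, wreathMul_mulSingle, div_eq_mul_inv] using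
      SemidirectProduct.inl_aut_mul_inv_mem_commutator (wreathMul ρ B) a (Pi.mulSingle y b)
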